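/- For every α > 0 and every integer n ≥ 2, the n-fold Kendall convolution power δ_1^{△_α n} is absolutely continuous with respect to Lebesgue measure with density x ↦ α n (n−1) x^{−2α−1} (1 − x^{−α})^{n−2} 1_{(1,∞)}(x); equivalently, δ_1^{△_α n}([0,x]) = (1 + (n−1)x^{−α}) (1 − x^{−α})_+^{n−1} for all x > 0. In particular, δ_1^{△_α 2} = π_{2α}. -/

import Mathlib

open MeasureTheory Set

/-- The Pareto probability measure `π_{2α}` on `ℝ`, with density
`2α x^(-(2α+1)) 1_{(1,∞)}(x)` with respect to Lebesgue measure. -/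
noncomputable def pareto (α : ℝ) : Measure ℝ :=
  volume.withDensity
    (fun x => ENNReal.ofReal (if 1 < x then 2 * α * x ^ (-(2 * α) - 1) else 0))

/-- The Kendall probability kernel `ρ_{a,b} = (1 - (a/b)^α) δ_b + (a/b)^α T_b π_{2α}`
for `0 ≤ a ≤ b` (with `ρ_{0,0} = δ_0`). -/
noncomputable def kendallKernelLe (α a b : ℝ) : Measure ℝ :=
  if b = 0 then Measure.dirac 0
  else ENNReal.ofReal (1 - (a / b) ^ α) • Measure.dirac b
      + ENNReal.ofReal ((a / b) ^ α) • Measure.map (fun x => b * x) (pareto α)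

/-- The Kendall kernel `ρ_{x,y}`, extended symmetrically. -/
noncomputable def kendallKernel (α x y : ℝ) : Measure ℝ :=
  kendallKernelLe α (min x y) (max x y)

/-- The Kendall convolution `λ △_α ν`, defined by
`(λ △_α ν)(A) = ∫∫ ρ_{x,y}(A) λ(dx) ν(dy)`. -/
noncomputable def kendallConv (α : ℝ) (lam ν : Measure ℝ) : Measure ℝ :=
  lam.bind (fun x => ν.bind (fun y => kendallKernel α x y))

/-- The `n`-fold Kendall convolution power `ν^{△_α n}`, with `ν^{△_α 0} = δ_0`. -/
noncomputable def kendallPow (α : ℝ) (ν : Measure ℝ) : ℕ → Measure ℝ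
  | 0 => Measure.dirac 0
  | n + 1 => kendallConv α (kendallPow α ν n) ν

/-- The Kendall–Williamson transform `Φ_ν(t) = ∫ (1 - (t s)^α)_+ ν(ds)`. -/
noncomputable def williamson (α : ℝ) (ν : Measure ℝ) (t : ℝ) : ℝ :=
  ∫ s, max (1 - (t * s) ^ α) 0 ∂ν

/-!
Convolving with `δ₁` is integration against the kernel `x ↦ ρ_{x,1}`, and for `x ≥ 1` the
distribution function of `ρ_{x,1}` is `t ↦ 1 - x ^ α t ^ (-2α)` on `[x, ∞)` and `0` below `x`.
Hence if `δ₁^{△n}` has density `f_n` on `(1, ∞)`, the distribution function of `δ₁^{△(n+1)}` is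
`t ↦ ∫_1^t f_n(x) (1 - x ^ α t ^ (-2α)) dx`, which a single antiderivative evaluates in closed form;
induction from `δ₁^{△2} = ρ_{1,1} = π_{2α}` gives all `n ≥ 2`.
-/

lemma Measurable.smul_measure' {β γ : Type*} [MeasurableSpace β] [MeasurableSpace γ]
    {f : β → ENNReal} {μ : β → Measure γ} (hf : Measurable f) (hμ : Measurable μ) :
    Measurable fun x => f x • μ x := by
  refine Measure.measurable_of_measurable_coe _ fun s hs => ?_
  simp only [Measure.smul_apply, smul_eq_mul]
  exact hf.mul ((Measure.measurable_coe hs).comp hμ)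

lemma measurable_map_const_mul (μ : Measure ℝ) [SFinite μ] :
    Measurable fun b : ℝ => μ.map (b * ·) := by
  refine Measure.measurable_of_measurable_coe _ fun s hs => ?_
  simp_rw [Measure.map_apply (measurable_const_mul _) hs]
  exact measurable_measure_prodMk_left (measurable_mul hs)

instance instSFinitePareto (α : ℝ) : SFinite (pareto α) := by unfold pareto; infer_instance

lemma measurable_kendallKernelLe (α : ℝ) :
    Measurable fun p : ℝ × ℝ => kendallKernelLe α p.1 p.2 := by
  unfold kendallKernelLe
  refine Measurable.ite (measurableSet_eq_fun measurable_snd measurable_const) measurable_const ?_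
  refine (Measurable.smul_measure' ?_ (Measure.measurable_dirac.comp measurable_snd)).add
    (Measurable.smul_measure' ?_ ((measurable_map_const_mul _).comp measurable_snd)) <;> fun_prop

lemma measurable_kendallKernel (α : ℝ) : Measurable (Function.uncurry (kendallKernel α)) :=
  (measurable_kendallKernelLe α).comp ((measurable_fst.min measurable_snd).prodMk
    (measurable_fst.max measurable_snd))

lemma measurable_kendallKernel_left (α c : ℝ) : Measurable (kendallKernel α · c) :=
  (measurable_kendallKernel α).comp (measurable_id.prodMk measurable_const)

lemma kendallConv_dirac (α c : ℝ) (lam : Measure ℝ) :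
    kendallConv α lam (Measure.dirac c) = lam.bind (kendallKernel α · c) := by
  unfold kendallConv
  congr with x : 1
  exact Measure.dirac_bind ((measurable_kendallKernel α).comp measurable_prodMk_left) c

/-- Density of `δ₁^{△_α (k+2)}` on `(1, ∞)`; the index is shifted, `k = n - 2`. -/
noncomputable def kendallDensity (α : ℝ) (k : ℕ) (x : ℝ) : ℝ :=
  α * (k + 2) * (k + 1) * x ^ (-(2 * α) - 1) * (1 - x ^ (-α)) ^ k

noncomputable def kendallCdf (α : ℝ) (k : ℕ) (x : ℝ) : ℝ :=
  (1 + (k + 1) * x ^ (-α)) * (1 - x ^ (-α)) ^ (k + 1)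

section

variable {α : ℝ}

lemma rpow_neg_mem_Icc (hα : 0 ≤ α) {x : ℝ} (hx : 1 ≤ x) : x ^ (-α) ∈ Icc 0 1 :=
  ⟨Real.rpow_nonneg (zero_le_one.trans hx) _,
    Real.rpow_le_one_of_one_le_of_nonpos hx (neg_nonpos.mpr hα)⟩

lemma kendallDensity_nonneg (hα : 0 < α) (k : ℕ) {x : ℝ} (hx : 1 ≤ x) :
    0 ≤ kendallDensity α k x := by
  have hu := rpow_neg_mem_Icc hα.le hx
  have := Real.rpow_nonneg (zero_le_one.trans hx) (-(2 * α) - 1)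
  unfold kendallDensity
  exact mul_nonneg (by positivity) (pow_nonneg (by linarith [hu.2]) k)

lemma kendallCdf_nonneg (hα : 0 < α) (k : ℕ) {x : ℝ} (hx : 1 ≤ x) : 0 ≤ kendallCdf α k x := by
  have hu := rpow_neg_mem_Icc hα.le hx
  unfold kendallCdf
  exact mul_nonneg (by nlinarith [hu.1]) (pow_nonneg (by linarith [hu.2]) _)

lemma kendallCdf_le (hα : 0 < α) (k : ℕ) {x : ℝ} (hx : 1 ≤ x) : kendallCdf α k x ≤ k + 2 := by
  obtain ⟨hu₀, hu₁⟩ := rpow_neg_mem_Icc hα.le hx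
  have hfac : 1 + (k + 1) * x ^ (-α) ≤ k + 2 := by nlinarith
  have hpow : (1 - x ^ (-α)) ^ (k + 1) ≤ 1 := pow_le_one₀ (by linarith) (by linarith)
  simpa [kendallCdf] using mul_le_mul hfac hpow (pow_nonneg (by linarith) _) (by positivity)

lemma kendallCdf_one (k : ℕ) : kendallCdf α k 1 = 0 := by simp [kendallCdf]

lemma hasDerivAt_kendallCdf_sub (k : ℕ) (c : ℝ) {x : ℝ} (hx : 0 < x) :
    HasDerivAt (fun y => kendallCdf α k y - c * (k + 2) * (1 - y ^ (-α)) ^ (k + 1))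
      (kendallDensity α k x * (1 - x ^ α * c)) x := by
  have hu : HasDerivAt (fun y : ℝ => y ^ (-α)) (-α * x ^ (-α - 1)) x :=
    Real.hasDerivAt_rpow_const (Or.inl hx.ne')
  have hv : HasDerivAt (fun y : ℝ => (1 - y ^ (-α)) ^ (k + 1))
      ((k + 1 : ℕ) * (1 - x ^ (-α)) ^ k * -(-α * x ^ (-α - 1))) x := by
    simpa using (hu.const_sub 1).fun_pow (k + 1)
  refine ((((hu.const_mul _).const_add 1).mul hv).sub (hv.const_mul _)).congr_deriv ?_
  have h2 : x ^ (-(2 * α) - 1) = x ^ (-α) * x ^ (-α - 1) := by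
    rw [← Real.rpow_add hx]; ring_nf
  have h1 : x ^ (-(2 * α) - 1) * x ^ α = x ^ (-α - 1) := by
    rw [← Real.rpow_add hx]; ring_nf
  unfold kendallDensity
  push_cast
  linear_combination (-(α * (k + 2) * (k + 1) * (1 - x ^ (-α)) ^ k)) * h2
    + (α * (k + 2) * (k + 1) * c * (1 - x ^ (-α)) ^ k) * h1

lemma continuousOn_kendallDensity_mul (k : ℕ) (c : ℝ) :
    ContinuousOn (fun x => kendallDensity α k x * (1 - x ^ α * c)) (Ioi 0) := by
  intro x hx
  have hx : x ≠ 0 := (mem_Ioi.mp hx).ne'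
  unfold kendallDensity
  fun_prop (disch := exact Or.inl hx)

lemma integral_Ioc_kendallDensity_mul (k : ℕ) (c : ℝ) {t : ℝ} (ht : 1 ≤ t) :
    ∫ x in Ioc 1 t, kendallDensity α k x * (1 - x ^ α * c)
      = kendallCdf α k t - c * (k + 2) * (1 - t ^ (-α)) ^ (k + 1) := by
  have hpos : ∀ x ∈ uIcc 1 t, 0 < x := fun x hx =>
    zero_lt_one.trans_le (by rw [uIcc_of_le ht] at hx; exact hx.1)
  rw [← intervalIntegral.integral_of_le ht, intervalIntegral.integral_eq_sub_of_hasDerivAt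
    (fun x hx => hasDerivAt_kendallCdf_sub k c (hpos x hx))
    ((continuousOn_kendallDensity_mul k c).mono hpos).intervalIntegrable]
  simp [kendallCdf_one]

lemma lintegral_Ioc_kendallDensity_mul (hα : 0 < α) (k : ℕ) {c t : ℝ} (ht : 1 ≤ t)
    (hc : 0 ≤ c) (hct : t ^ α * c ≤ 1) :
    ∫⁻ x in Ioc 1 t, ENNReal.ofReal (kendallDensity α k x * (1 - x ^ α * c))
      = ENNReal.ofReal (kendallCdf α k t - c * (k + 2) * (1 - t ^ (-α)) ^ (k + 1)) := by
  rw [← ofReal_integral_eq_lintegral_ofReal, integral_Ioc_kendallDensity_mul k c ht]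
  · exact ((continuousOn_kendallDensity_mul k c).mono fun x hx =>
      zero_lt_one.trans_le hx.1).integrableOn_Icc.mono_set Ioc_subset_Icc_self
  · filter_upwards [self_mem_ae_restrict measurableSet_Ioc] with x hx
    have hxt : x ^ α * c ≤ t ^ α * c :=
      mul_le_mul_of_nonneg_right (Real.rpow_le_rpow (by linarith [hx.1]) hx.2 hα.le) hc
    exact mul_nonneg (kendallDensity_nonneg hα k hx.1.le) (by linarith)

lemma lintegral_Ioc_kendallDensity (hα : 0 < α) (k : ℕ) {t : ℝ} (ht : 1 ≤ t) :
    ∫⁻ x in Ioc 1 t, ENNReal.ofReal (kendallDensity α k x)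
      = ENNReal.ofReal (kendallCdf α k t) := by
  simpa using lintegral_Ioc_kendallDensity_mul hα k ht le_rfl (c := 0) (by simp)

lemma kendallCdf_succ (k : ℕ) (t : ℝ) :
    kendallCdf α (k + 1) t
      = kendallCdf α k t - (t ^ (-α)) ^ 2 * (k + 2) * (1 - t ^ (-α)) ^ (k + 1) := by
  unfold kendallCdf
  push_cast
  ring

noncomputable def kendallMeasure (α : ℝ) (k : ℕ) : Measure ℝ :=
  (volume.restrict (Ioi 1)).withDensity fun x => ENNReal.ofReal (kendallDensity α k x)

lemma kendallMeasure_apply (k : ℕ) {s : Set ℝ} (hs : MeasurableSet s) :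
    kendallMeasure α k s = ∫⁻ x in s ∩ Ioi 1, ENNReal.ofReal (kendallDensity α k x) := by
  rw [kendallMeasure, withDensity_apply _ hs, Measure.restrict_restrict hs]

lemma kendallMeasure_Iic (k : ℕ) (t : ℝ) :
    kendallMeasure α k (Iic t) = ∫⁻ x in Ioc 1 t, ENNReal.ofReal (kendallDensity α k x) := by
  rw [kendallMeasure_apply k measurableSet_Iic, inter_comm, Ioi_inter_Iic]

lemma kendallMeasure_Iic_of_le_one (k : ℕ) {t : ℝ} (ht : t ≤ 1) :
    kendallMeasure α k (Iic t) = 0 := by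
  simp [kendallMeasure_Iic, Ioc_eq_empty_of_le ht]

lemma kendallMeasure_Iic_of_one_le (hα : 0 < α) (k : ℕ) {t : ℝ} (ht : 1 ≤ t) :
    kendallMeasure α k (Iic t) = ENNReal.ofReal (kendallCdf α k t) := by
  rw [kendallMeasure_Iic, lintegral_Ioc_kendallDensity hα k ht]

lemma isFiniteMeasure_of_forall_measure_Iic_le {μ : Measure ℝ} {C : ENNReal} (hC : C ≠ ⊤)
    (h : ∀ t, μ (Iic t) ≤ C) : IsFiniteMeasure μ :=
  ⟨(le_of_tendsto' (tendsto_measure_Iic_atTop μ) h).trans_lt hC.lt_top⟩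

lemma isFiniteMeasure_kendallMeasure (hα : 0 < α) (k : ℕ) :
    IsFiniteMeasure (kendallMeasure α k) := by
  refine isFiniteMeasure_of_forall_measure_Iic_le (C := ENNReal.ofReal (k + 2))
    ENNReal.ofReal_ne_top fun t => ?_
  rcases le_total t 1 with ht | ht
  · simp [kendallMeasure_Iic_of_le_one k ht]
  · rw [kendallMeasure_Iic_of_one_le hα k ht]
    exact ENNReal.ofReal_le_ofReal (kendallCdf_le hα k ht)

lemma withDensity_ofReal_ite_one_lt (f : ℝ → ℝ) :
    volume.withDensity (fun x => ENNReal.ofReal (if 1 < x then f x else 0))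
      = (volume.restrict (Ioi 1)).withDensity fun x => ENNReal.ofReal (f x) := by
  rw [← withDensity_indicator measurableSet_Ioi]
  congr with x
  by_cases hx : 1 < x <;> simp [hx]

lemma pareto_eq_kendallMeasure_zero : pareto α = kendallMeasure α 0 := by
  rw [pareto, withDensity_ofReal_ite_one_lt, kendallMeasure]
  congr with x
  congr 1
  simp only [kendallDensity, CharP.cast_eq_zero, pow_zero]
  ring

lemma pareto_Iic_of_le_one {u : ℝ} (hu : u ≤ 1) : pareto α (Iic u) = 0 := by
  rw [pareto_eq_kendallMeasure_zero, kendallMeasure_Iic_of_le_one 0 hu]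

lemma pareto_Iic_of_one_le (hα : 0 < α) {u : ℝ} (hu : 1 ≤ u) :
    pareto α (Iic u) = ENNReal.ofReal (1 - (u ^ (-α)) ^ 2) := by
  rw [pareto_eq_kendallMeasure_zero, kendallMeasure_Iic_of_one_le hα 0 hu, kendallCdf]
  ring_nf

lemma kendallKernel_one_of_one_le {x : ℝ} (hx : 1 ≤ x) :
    kendallKernel α x 1 = ENNReal.ofReal (1 - x ^ (-α)) • Measure.dirac x
      + ENNReal.ofReal (x ^ (-α)) • (pareto α).map (x * ·) := by
  have hx₀ : 0 < x := zero_lt_one.trans_le hx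
  rw [kendallKernel, kendallKernelLe, min_eq_right hx, max_eq_left hx, if_neg hx₀.ne',
    one_div, Real.inv_rpow hx₀.le, ← Real.rpow_neg hx₀.le]

lemma kendallKernel_one_Iic (hα : 0 < α) {x : ℝ} (hx : 1 ≤ x) (t : ℝ) :
    kendallKernel α x 1 (Iic t)
      = if x ≤ t then ENNReal.ofReal (1 - x ^ α * (t ^ (-α)) ^ 2) else 0 := by
  have hx₀ : 0 < x := zero_lt_one.trans_le hx
  have hpre : (x * ·) ⁻¹' Iic t = Iic (t / x) := by
    ext y
    simp [le_div_iff₀ hx₀, mul_comm]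
  rw [kendallKernel_one_of_one_le hx, Measure.add_apply, Measure.smul_apply, Measure.smul_apply,
    Measure.dirac_apply' _ measurableSet_Iic,
    Measure.map_apply (measurable_const_mul x) measurableSet_Iic, hpre]
  split_ifs with hxt
  · have ht₀ : 0 < t := hx₀.trans_le hxt
    have hu := rpow_neg_mem_Icc hα.le hx
    have hv := rpow_neg_mem_Icc hα.le ((one_le_div hx₀).mpr hxt)
    have hdiv : (t / x) ^ (-α) = t ^ (-α) * x ^ α := by
      rw [Real.div_rpow ht₀.le hx₀.le, Real.rpow_neg hx₀.le, div_inv_eq_mul]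
    have hxα : x ^ (-α) * x ^ α = 1 := by
      rw [← Real.rpow_add hx₀, neg_add_cancel, Real.rpow_zero]
    rw [indicator_of_mem (mem_Iic.mpr hxt), Pi.one_apply, smul_eq_mul, smul_eq_mul, mul_one,
      pareto_Iic_of_one_le hα ((one_le_div hx₀).mpr hxt), ← ENNReal.ofReal_mul hu.1,
      ← ENNReal.ofReal_add (by linarith [hu.2]) (mul_nonneg hu.1 (by nlinarith [hv.1, hv.2]))]
    congr 1
    rw [hdiv]
    linear_combination (-(x ^ α * (t ^ (-α)) ^ 2)) * hxα
  · rw [indicator_of_notMem (by simpa using hxt), pareto_Iic_of_le_one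
      ((div_le_one hx₀).mpr (not_le.mp hxt).le)]
    simp

lemma rpow_mul_rpow_neg_sq_le_one (hα : 0 < α) {t : ℝ} (ht : 1 ≤ t) :
    t ^ α * (t ^ (-α)) ^ 2 ≤ 1 := by
  have htα : 1 ≤ t ^ α := Real.one_le_rpow ht hα.le
  have hinv : t ^ α * ((t ^ α)⁻¹) ^ 2 = (t ^ α)⁻¹ := by field_simp
  rw [Real.rpow_neg (zero_le_one.trans ht), hinv]
  exact inv_le_one_of_one_le₀ htα

lemma bind_kendallMeasure_kendallKernel_one (hα : 0 < α) (k : ℕ) :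
    (kendallMeasure α k).bind (kendallKernel α · 1) = kendallMeasure α (k + 1) := by
  have := isFiniteMeasure_kendallMeasure hα (k + 1)
  refine (Measure.ext_of_Iic _ _ fun t => ?_).symm
  have hκt : Measurable fun x => kendallKernel α x 1 (Iic t) :=
    (Measure.measurable_coe measurableSet_Iic).comp (measurable_kendallKernel_left α 1)
  have hintegrand : ∀ x ∈ Ioi (1 : ℝ),
      ENNReal.ofReal (kendallDensity α k x) * kendallKernel α x 1 (Iic t)
        = (Iic t).indicator
            (fun x => ENNReal.ofReal (kendallDensity α k x * (1 - x ^ α * (t ^ (-α)) ^ 2))) x := by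
    intro x hx
    rw [kendallKernel_one_Iic hα hx.le]
    split_ifs with hxt
    · rw [indicator_of_mem (show x ∈ Iic t from hxt),
        ENNReal.ofReal_mul (kendallDensity_nonneg hα k hx.le)]
    · rw [indicator_of_notMem (show x ∉ Iic t from hxt), mul_zero]
  rw [Measure.bind_apply measurableSet_Iic (measurable_kendallKernel_left α 1).aemeasurable,
    kendallMeasure_Iic, kendallMeasure,
    lintegral_withDensity_eq_lintegral_mul _ (by unfold kendallDensity; fun_prop) hκt]
  simp only [Pi.mul_apply]
  rw [setLIntegral_congr_fun measurableSet_Ioi hintegrand,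
    setLIntegral_indicator measurableSet_Iic, Iic_inter_Ioi]
  rcases lt_or_ge t 1 with ht | ht
  · simp [Ioc_eq_empty_of_le ht.le]
  · rw [lintegral_Ioc_kendallDensity hα (k + 1) ht, lintegral_Ioc_kendallDensity_mul hα k ht
      (sq_nonneg _) (rpow_mul_rpow_neg_sq_le_one hα ht), kendallCdf_succ]

lemma kendallMeasure_Icc_zero_toReal (hα : 0 < α) (k : ℕ) {x : ℝ} (hx : 0 < x) :
    (kendallMeasure α k (Icc 0 x)).toReal
      = (1 + (k + 1) * x ^ (-α)) * (max (1 - x ^ (-α)) 0) ^ (k + 1) := by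
  have hinter : Icc 0 x ∩ Ioi 1 = Ioc 1 x := by
    ext y
    simp only [mem_inter_iff, mem_Icc, mem_Ioi, mem_Ioc]
    constructor
    · rintro ⟨⟨-, hyx⟩, h1y⟩
      exact ⟨h1y, hyx⟩
    · rintro ⟨h1y, hyx⟩
      exact ⟨⟨by linarith, hyx⟩, h1y⟩
  rw [kendallMeasure_apply k measurableSet_Icc, hinter]
  rcases lt_or_ge x 1 with hx1 | hx1
  · have hxα : 1 ≤ x ^ (-α) := Real.one_le_rpow_of_pos_of_le_one_of_nonpos hx hx1.le (by linarith)
    simp [Ioc_eq_empty_of_le hx1.le, max_eq_right (sub_nonpos.mpr hxα)]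
  · rw [lintegral_Ioc_kendallDensity hα k hx1, ENNReal.toReal_ofReal (kendallCdf_nonneg hα k hx1),
      max_eq_left (sub_nonneg.mpr (rpow_neg_mem_Icc hα.le hx1).2), kendallCdf]

lemma kendallPow_dirac_one_one (hα : 0 < α) :
    kendallPow α (Measure.dirac 1) 1 = Measure.dirac 1 := by
  rw [kendallPow, kendallPow, kendallConv_dirac,
    Measure.dirac_bind (measurable_kendallKernel_left α 1), kendallKernel, kendallKernelLe,
    min_eq_left zero_le_one, max_eq_right zero_le_one, if_neg one_ne_zero]
  simp [Real.zero_rpow hα.ne']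

lemma kendallPow_dirac_one_two (hα : 0 < α) :
    kendallPow α (Measure.dirac 1) 2 = pareto α := by
  rw [kendallPow, kendallPow_dirac_one_one hα, kendallConv_dirac,
    Measure.dirac_bind (measurable_kendallKernel_left α 1), kendallKernel_one_of_one_le le_rfl]
  simp [Measure.map_id']

lemma kendallPow_dirac_one_eq_kendallMeasure (hα : 0 < α) (k : ℕ) :
    kendallPow α (Measure.dirac 1) (k + 2) = kendallMeasure α k := by
  induction k with
  | zero => rw [kendallPow_dirac_one_two hα, pareto_eq_kendallMeasure_zero]
  | succ k ih =>
    rw [kendallPow, kendallConv_dirac, ih, bind_kendallMeasure_kendallKernel_one hα]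

end

/-- For `α > 0` and `n ≥ 2`, the `n`-fold Kendall convolution power `δ_1^{△_α n}` is
absolutely continuous with density `x ↦ α n (n-1) x^(-2α-1) (1 - x^(-α))^(n-2) 1_{(1,∞)}(x)`;
equivalently, `δ_1^{△_α n}([0,x]) = (1 + (n-1) x^(-α)) (1 - x^(-α))_+^(n-1)` for all `x > 0`.
In particular, `δ_1^{△_α 2} = π_{2α}`. -/
theorem kendallPow_dirac_one
    (α : ℝ) (hα : 0 < α) (n : ℕ) (hn : 2 ≤ n) :
    kendallPow α (Measure.dirac 1) n
      = volume.withDensity (fun x => ENNReal.ofReal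
          (if 1 < x then
            α * n * ((n : ℝ) - 1) * x ^ (-(2 * α) - 1) * (1 - x ^ (-α)) ^ (n - 2)
          else 0))
    ∧ (∀ x : ℝ, 0 < x →
        ((kendallPow α (Measure.dirac 1) n) (Set.Icc 0 x)).toReal
          = (1 + ((n : ℝ) - 1) * x ^ (-α)) * (max (1 - x ^ (-α)) 0) ^ (n - 1))
    ∧ kendallPow α (Measure.dirac 1) 2 = pareto α := by
  obtain ⟨k, rfl⟩ : ∃ k, n = k + 2 := ⟨n - 2, by omega⟩
  rw [kendallPow_dirac_one_eq_kendallMeasure hα k]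
  refine ⟨?_, fun x hx => ?_, kendallPow_dirac_one_two hα⟩
  · rw [withDensity_ofReal_ite_one_lt, kendallMeasure]
    congr with x
    simp only [kendallDensity, Nat.add_sub_cancel]
    push_cast
    ring_nf
  · rw [kendallMeasure_Icc_zero_toReal hα k hx]
    push_cast
    ring_nf
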